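/- Let R = ℝ^d/ℤ^d. The collection of subsets of R that are finite unions of closed subgroups of R, ordered by inclusion, satisfies the descending chain condition: every decreasing sequence X₁ ⊇ X₂ ⊇ X₃ ⊇ … of finite unions of closed subgroups stabilizes. -/

import Mathlib

/-- A finite union of closed subgroups of the real torus `R = ℝ^d/ℤ^d`. -/
def IsFinUnionClosedSubgroups (d : ℕ) (A : Set (Fin d → AddCircle (1 : ℝ))) : Prop :=
  ∃ S : Set (AddSubgroup (Fin d → AddCircle (1 : ℝ))), S.Finite ∧
    (∀ H ∈ S, IsClosed (H : Set (Fin d → AddCircle (1 : ℝ)))) ∧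
    A = ⋃ H ∈ S, (H : Set (Fin d → AddCircle (1 : ℝ)))

set_option linter.unusedTactic false
set_option linter.deprecated false


open Submodule

noncomputable def ee : AddCircle (1:ℝ) → ℂ := fun t => (AddCircle.toCircle t : ℂ)

lemma ee_add (s t : AddCircle (1:ℝ)) : ee (s + t) = ee s * ee t := by
  simp [ee, AddCircle.toCircle_add]

lemma ee_ne_zero (t : AddCircle (1:ℝ)) : ee t ≠ 0 := Circle.coe_ne_zero _

lemma ee_zero : ee (0 : AddCircle (1:ℝ)) = 1 := by
  have h := ee_add (0 : AddCircle (1:ℝ)) 0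
  rw [add_zero] at h
  have := ee_ne_zero (0 : AddCircle (1:ℝ))
  field_simp at h
  tauto

lemma ee_eq_one_iff (t : AddCircle (1:ℝ)) : ee t = 1 ↔ t = 0 := by
  constructor
  · intro h
    have h1 : AddCircle.toCircle t = AddCircle.toCircle (0 : AddCircle (1:ℝ)) := by
      apply Subtype.ext
      rw [show ((AddCircle.toCircle (0 : AddCircle (1:ℝ)) : ℂ)) = 1 from ee_zero]
      exact h
    exact AddCircle.injective_toCircle one_ne_zero h1
  · rintro rfl; exact ee_zero

lemma ee_neg (t : AddCircle (1:ℝ)) : ee (-t) = (ee t)⁻¹ := by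
  have h := ee_add t (-t)
  rw [add_neg_cancel, ee_zero] at h
  field_simp [ee_ne_zero t]
  linear_combination -h

lemma ee_nsmul (n : ℕ) (t : AddCircle (1:ℝ)) : ee (n • t) = ee t ^ n := by
  induction n with
  | zero => simpa using ee_zero
  | succ k ih => rw [succ_nsmul, ee_add, ih, pow_succ]

lemma ee_zsmul (n : ℤ) (t : AddCircle (1:ℝ)) : ee (n • t) = ee t ^ n := by
  rcases n with n | n
  · simpa using ee_nsmul n t
  · rw [negSucc_zsmul, ee_neg, ee_nsmul, zpow_negSucc]

lemma ee_sum {α : Type*} (s : Finset α) (f : α → AddCircle (1:ℝ)) :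
    ee (∑ a ∈ s, f a) = ∏ a ∈ s, ee (f a) := by
  classical
  induction s using Finset.induction_on with
  | empty => simpa using ee_zero
  | insert _ _ h ih => rw [Finset.sum_insert h, Finset.prod_insert h, ee_add, ih]

/-- The character of the torus attached to an integer vector `m`. -/
noncomputable def chi {d : ℕ} (m : Fin d → ℤ) (x : Fin d → AddCircle (1:ℝ)) : ℂ :=
  ∏ i, ee (x i) ^ (m i)

lemma chi_eq_ee_sum {d : ℕ} (m : Fin d → ℤ) (x : Fin d → AddCircle (1:ℝ)) :
    chi m x = ee (∑ i, m i • x i) := by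
  rw [chi, ee_sum]
  exact Finset.prod_congr rfl fun i _ => (ee_zsmul _ _).symm


open Submodule Filter Topology

lemma discrete_of_sep {E : Type*} [NormedAddCommGroup E] {N : Submodule ℤ E}
    (ε : ℝ) (hε : 0 < ε) (h : ∀ z ∈ N, ‖z‖ < ε → z = 0) : DiscreteTopology N := by
  rw [discreteTopology_iff_isOpen_singleton_zero]
  have heq : ({0} : Set N) = (Subtype.val ⁻¹' Metric.ball (0:E) ε : Set N) := by
    ext z
    simp only [Set.mem_singleton_iff, Set.mem_preimage, Metric.mem_ball, dist_zero_right]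
    constructor
    · rintro rfl; simpa using hε
    · intro hz; exact Subtype.ext (h z.1 z.2 hz)
  rw [heq]
  exact (Metric.isOpen_ball).preimage continuous_subtype_val

section
variable {d : ℕ}

lemma lambda_discrete_key (G : AddSubgroup (Fin d → ℝ)) (hG : IsClosed (G : Set (Fin d → ℝ)))
    (V : Submodule ℝ (Fin d → ℝ)) (hV : ∀ v, v ∈ V ↔ ∀ t : ℝ, t • v ∈ G)
    (W : Submodule ℝ (Fin d → ℝ)) (hVW : IsCompl V W) :
    ∃ ε : ℝ, 0 < ε ∧ ∀ z, z ∈ G → z ∈ W → ‖z‖ < ε → z = 0 := by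
  by_contra hcon
  push_neg at hcon
  choose z hzG hzW hznorm hzne using fun n : ℕ => hcon (1/(n+1)) (by positivity)
  set a : ℕ → ℝ := fun n => ‖z n‖ with ha
  have hapos : ∀ n, 0 < a n := fun n => norm_pos_iff.mpr (hzne n)
  set u : ℕ → Fin d → ℝ := fun n => (a n)⁻¹ • z n with hu
  have hunorm : ∀ n, u n ∈ Metric.sphere (0 : Fin d → ℝ) 1 := by
    intro n
    simp only [mem_sphere_iff_norm, sub_zero, hu, norm_smul, norm_inv, norm_norm]
    rw [Real.norm_eq_abs, abs_of_pos (hapos n), inv_mul_cancel₀ (hapos n).ne']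
  obtain ⟨l, hl_sph, φ, hφ, hconv⟩ :=
    (isCompact_sphere (0 : Fin d → ℝ) 1).tendsto_subseq hunorm
  have hlnorm : ‖l‖ = 1 := by simpa [mem_sphere_iff_norm] using hl_sph
  have hlW : l ∈ W := by
    refine (W.closed_of_finiteDimensional).mem_of_tendsto hconv
      (Filter.Eventually.of_forall fun n => ?_)
    exact W.smul_mem _ (hzW (φ n))
  -- a (φ n) → 0
  have haconv : Tendsto (fun n => a (φ n)) atTop (𝓝 0) := by
    have hb : ∀ n : ℕ, a (φ n) ≤ 1/(n+1) := by
      intro n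
      calc a (φ n) ≤ 1/(φ n + 1) := (hznorm (φ n)).le
        _ ≤ 1/(n+1) := by
            apply one_div_le_one_div_of_le (by positivity)
            have : n ≤ φ n := hφ.le_apply
            have : (n:ℝ) ≤ (φ n : ℝ) := Nat.cast_le.mpr this
            linarith
    exact squeeze_zero (fun n => (hapos _).le) hb tendsto_one_div_add_atTop_nhds_zero_nat
  have hlV : l ∈ V := by
    rw [hV]
    intro t
    have hwG : ∀ n : ℕ, (⌊t / a (φ n)⌋ • z (φ n) : Fin d → ℝ) ∈ G :=
      fun n => G.zsmul_mem (hzG (φ n)) _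
    have hbound : ∀ n : ℕ, ‖(⌊t / a (φ n)⌋ • z (φ n) : Fin d → ℝ) - t • l‖
        ≤ a (φ n) + |t| * ‖u (φ n) - l‖ := by
      intro n
      have hz_eq : z (φ n) = a (φ n) • u (φ n) :=
        (smul_inv_smul₀ (hapos (φ n)).ne' (z (φ n))).symm
      have key : (⌊t / a (φ n)⌋ • z (φ n) : Fin d → ℝ) - t • l
          = ((⌊t / a (φ n)⌋ : ℝ) * a (φ n) - t) • u (φ n) + t • (u (φ n) - l) := by
        rw [show (⌊t / a (φ n)⌋ • z (φ n) : Fin d → ℝ) = (⌊t / a (φ n)⌋ : ℝ) • z (φ n) from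
          (Int.cast_smul_eq_zsmul ℝ _ _).symm, hz_eq, smul_smul, sub_smul, smul_sub]
        abel
      rw [key]
      refine (norm_add_le _ _).trans ?_
      have hus : ‖u (φ n)‖ = 1 := by simpa [mem_sphere_iff_norm] using hunorm (φ n)
      rw [norm_smul ((⌊t / a (φ n)⌋:ℝ) * a (φ n) - t) (u (φ n)),
        norm_smul t (u (φ n) - l), hus, mul_one, Real.norm_eq_abs, Real.norm_eq_abs]
      gcongr
      have hpos := hapos (φ n)
      have h1 : (⌊t / a (φ n)⌋ : ℝ) * a (φ n) ≤ t := by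
        have hfl := Int.floor_le (t / a (φ n))
        calc (⌊t / a (φ n)⌋ : ℝ) * a (φ n) ≤ (t / a (φ n)) * a (φ n) := by gcongr
          _ = t := div_mul_cancel₀ t hpos.ne'
      have h2 : t < ((⌊t / a (φ n)⌋ : ℝ) + 1) * a (φ n) := by
        have h3 := Int.lt_floor_add_one (t / a (φ n))
        calc t = (t / a (φ n)) * a (φ n) := (div_mul_cancel₀ t hpos.ne').symm
          _ < ((⌊t / a (φ n)⌋ : ℝ) + 1) * a (φ n) := by gcongr
      rw [abs_le]
      constructor <;> nlinarith
    have hwconv : Tendsto (fun n : ℕ => (⌊t / a (φ n)⌋ • z (φ n) : Fin d → ℝ)) atTop (𝓝 (t • l)) := by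
      rw [tendsto_iff_norm_sub_tendsto_zero]
      apply squeeze_zero (fun n => norm_nonneg _) hbound
      have h2 : Tendsto (fun n => ‖u (φ n) - l‖) atTop (𝓝 0) := by
        rw [← tendsto_iff_norm_sub_tendsto_zero]
        exact hconv
      have := haconv.add (h2.const_mul |t|)
      simpa using this
    exact hG.mem_of_tendsto hwconv (Filter.Eventually.of_forall hwG)
  have : l = (0 : Fin d → ℝ) := by
    have hbot : l ∈ V ⊓ W := ⟨hlV, hlW⟩
    have := hVW.disjoint.le_bot hbot
    simpa using this
  rw [this] at hlnorm
  simp at hlnorm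

end

lemma half_not_int (n : ℤ) : ((1:ℝ)/2) ≠ (n:ℝ) := by
  intro h
  have h2 : ((2*n : ℤ) : ℝ) = ((1:ℤ):ℝ) := by push_cast; linarith
  have := Int.cast_injective (α := ℝ) h2
  omega

set_option maxHeartbeats 2000000 in
lemma sep_real (d : ℕ) (G : AddSubgroup (Fin d → ℝ)) (hG : IsClosed (G : Set (Fin d → ℝ)))
    (x : Fin d → ℝ) (hx : x ∉ G) :
    ∃ φ : (Fin d → ℝ) →ₗ[ℝ] ℝ, (∀ g ∈ G, ∃ n : ℤ, φ g = n) ∧ ∀ n : ℤ, φ x ≠ n := by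
  classical
  -- the maximal subspace contained in G
  let V : Submodule ℝ (Fin d → ℝ) :=
    { carrier := {v | ∀ t : ℝ, t • v ∈ G}
      add_mem' := fun hv hw t => by
        simpa [smul_add] using G.add_mem (hv t) (hw t)
      zero_mem' := fun t => by simpa using G.zero_mem
      smul_mem' := fun c v hv t => by simpa [smul_smul] using hv (t * c) }
  have hVmem : ∀ v, v ∈ V ↔ ∀ t : ℝ, t • v ∈ G := fun v => Iff.rfl
  have hVG : ∀ v ∈ V, v ∈ G := fun v hv => by simpa using (hVmem v).mp hv 1
  obtain ⟨W, hVW⟩ := Submodule.exists_isCompl V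
  -- the lattice part
  let Λ : Submodule ℤ (Fin d → ℝ) := (AddSubgroup.toIntSubmodule G) ⊓ (W.restrictScalars ℤ)
  have hΛmem : ∀ z, z ∈ Λ ↔ z ∈ G ∧ z ∈ W := fun z => Iff.rfl
  obtain ⟨ε, hε, hsep⟩ := lambda_discrete_key G hG V hVmem W hVW
  haveI hΛdisc : DiscreteTopology Λ :=
    discrete_of_sep ε hε (fun z hz hznorm => hsep z ((hΛmem z).mp hz).1 ((hΛmem z).mp hz).2 hznorm)
  have hΛW : ∀ z ∈ Λ, z ∈ W := fun z hz => ((hΛmem z).mp hz).2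
  -- pass to the span of Λ to use ZLattice theory
  set E₀ : Submodule ℝ (Fin d → ℝ) := span ℝ (Λ : Set (Fin d → ℝ)) with hE₀def
  have hE₀W : E₀ ≤ W := span_le.mpr (fun z hz => hΛW z hz)
  set f : E₀ →ₗ[ℝ] (Fin d → ℝ) := E₀.subtype with hfdef
  set L : Submodule ℤ E₀ := Λ.comap (f.restrictScalars ℤ) with hLdef
  have h_img : ⇑f '' L = Λ := by
    rw [← LinearMap.coe_restrictScalars ℤ f, ← Submodule.map_coe (f.restrictScalars ℤ),
      Submodule.map_comap_eq_self]
    exact fun x hx => LinearMap.mem_range.mpr ⟨⟨x, Submodule.subset_span hx⟩, rfl⟩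
  haveI : DiscreteTopology L := by
    refine DiscreteTopology.preimage_of_continuous_injective (Λ : Set (Fin d → ℝ)) ?_
      (injective_subtype _)
    exact LinearMap.continuous_of_finiteDimensional f
  haveI : IsZLattice ℝ L := ⟨by
    rw [← (Submodule.map_injective_of_injective (injective_subtype E₀)).eq_iff,
      Submodule.map_span, Submodule.map_top, range_subtype]
    rw [show (⇑E₀.subtype '' (L : Set E₀)) = (Λ : Set (Fin d → ℝ)) from h_img]⟩
  haveI : Module.Finite ℤ L := ZLattice.module_finite ℝ L
  haveI : Module.Free ℤ L := ZLattice.module_free ℝ L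
  set ι := Module.Free.ChooseBasisIndex ℤ L with hidef
  let b₀ : Module.Basis ι ℤ L := Module.Free.chooseBasis ℤ L
  let bE : Module.Basis ι ℝ E₀ := b₀.ofZLatticeBasis ℝ L
  -- quotient by V
  let q : (Fin d → ℝ) →ₗ[ℝ] ((Fin d → ℝ) ⧸ V) := V.mkQ
  let b' : ι → ((Fin d → ℝ) ⧸ V) := fun i => q ((bE i : Fin d → ℝ))
  have hqker : ∀ m : E₀, q (m : Fin d → ℝ) = 0 → m = 0 := by
    intro m hm
    have h1 : (m : Fin d → ℝ) ∈ V := by rwa [Submodule.mkQ_apply, Submodule.Quotient.mk_eq_zero] at hm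
    have h2 : (m : Fin d → ℝ) ∈ W := hE₀W m.2
    have h3 : (m : Fin d → ℝ) = 0 := by
      have := hVW.disjoint.le_bot (⟨h1, h2⟩ : (m : Fin d → ℝ) ∈ V ⊓ W)
      simpa using this
    exact Subtype.ext h3
  have hb'li : LinearIndependent ℝ b' := by
    have hker : LinearMap.ker (q.comp f) = ⊥ := by
      rw [LinearMap.ker_eq_bot']
      intro m hm
      exact hqker m hm
    exact bE.linearIndependent.map' (q.comp f) hker
  -- the image lattice in the quotient
  let Λ' : Submodule ℤ ((Fin d → ℝ) ⧸ V) := span ℤ (Set.range b')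
  have hb'Λ : ∀ i : ι, ∃ w ∈ Λ, q w = b' i := by
    intro i
    refine ⟨((b₀ i : E₀) : Fin d → ℝ), ?_, ?_⟩
    · exact (b₀ i).2
    · show q ((b₀ i : E₀) : Fin d → ℝ) = q ((bE i : Fin d → ℝ))
      rw [b₀.ofZLatticeBasis_apply ℝ L]
  have hGΛ' : ∀ g ∈ G, q g ∈ Λ' := by
    intro g hg
    have hgsup : g ∈ V ⊔ W := by rw [hVW.sup_eq_top]; trivial
    obtain ⟨v, hv, w, hw, hvw⟩ := Submodule.mem_sup.mp hgsup
    have hwG : w ∈ G := by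
      have hvG : v ∈ G := hVG v hv
      have := G.sub_mem hg hvG
      rwa [show g - v = w by rw [← hvw]; abel] at this
    have hwΛ : w ∈ Λ := (hΛmem w).mpr ⟨hwG, hw⟩
    have hwE₀ : w ∈ E₀ := subset_span hwΛ
    have hqg : q g = q w := by
      rw [← hvw, map_add]
      rw [show q v = 0 from (Submodule.Quotient.mk_eq_zero V).mpr hv, zero_add]
    rw [hqg]
    let wq : L := ⟨⟨w, hwE₀⟩, by simpa [hLdef, hfdef] using hwΛ⟩
    let ψ : L →ₗ[ℤ] ((Fin d → ℝ) ⧸ V) :=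
      ((q.restrictScalars ℤ).comp (f.restrictScalars ℤ)).comp L.subtype
    have hqw : q w = ψ wq := rfl
    rw [hqw, ← b₀.sum_repr wq, map_sum]
    refine Submodule.sum_mem _ fun i _ => ?_
    rw [map_zsmul]
    refine Submodule.smul_mem _ _ (subset_span ⟨i, ?_⟩)
    show b' i = ψ (b₀ i)
    show b' i = q ((b₀ i : E₀) : Fin d → ℝ)
    rw [show ((b₀ i : E₀) : Fin d → ℝ) = (bE i : Fin d → ℝ) by rw [b₀.ofZLatticeBasis_apply ℝ L]]
  have hxΛ' : q x ∉ Λ' := by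
    intro hmem
    have hsub : Λ' ≤ AddSubgroup.toIntSubmodule (G.map q.toAddMonoidHom) := by
      rw [span_le]
      rintro _ ⟨i, rfl⟩
      obtain ⟨w, hwΛ, hqw⟩ := hb'Λ i
      exact AddSubgroup.mem_map.mpr ⟨w, ((hΛmem w).mp hwΛ).1, hqw⟩
    obtain ⟨g, hgG, hgq⟩ := AddSubgroup.mem_map.mp (hsub hmem)
    have : g - x ∈ V := (Submodule.Quotient.eq V).mp hgq
    have : x ∈ G := by
      have h5 := G.sub_mem hgG (hVG _ this)
      rwa [show g - (g - x) = x by abel] at h5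
    exact hx this
  -- extend to a basis of the quotient
  have hsubli : LinearIndepOn ℝ id (Set.range b') :=
    (linearIndepOn_id_range_iff hb'li.injective).mpr hb'li
  let B := Module.Basis.extend hsubli
  haveI : Fintype (hsubli.extend (Set.subset_univ (Set.range b'))) :=
    FiniteDimensional.fintypeBasisIndex B
  -- coordinates of lattice points
  have hcoord1 : ∀ (j : ↥(hsubli.extend (Set.subset_univ (Set.range b')))),
      ∀ z ∈ Λ', ∃ n : ℤ, B.repr z j = n := by
    intro j
    have : Λ' ≤ Submodule.comap ((B.coord j).restrictScalars ℤ)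
        (span ℤ ({1} : Set ℝ)) := by
      rw [span_le]
      rintro _ ⟨i, rfl⟩
      have hmem : b' i ∈ hsubli.extend (Set.subset_univ (Set.range b')) :=
        hsubli.subset_extend _ ⟨i, rfl⟩
      simp only [SetLike.mem_coe, Submodule.mem_comap, LinearMap.coe_restrictScalars,
        Module.Basis.coord_apply]
      rw [show b' i = B ⟨b' i, hmem⟩ by rw [Module.Basis.coe_extend], B.repr_self]
      rw [Finsupp.single_apply]
      by_cases h : (⟨b' i, hmem⟩ : ↥(hsubli.extend (Set.subset_univ (Set.range b')))) = j
      · simp [h, mem_span_singleton]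
      · simp [h, mem_span_singleton]
    intro z hz
    have := this hz
    simp only [Submodule.mem_comap, LinearMap.coe_restrictScalars, Module.Basis.coord_apply,
      mem_span_singleton] at this
    obtain ⟨n, hn⟩ := this
    exact ⟨n, by rw [← hn]; simp⟩
  have hcoord2 : ∀ (j : ↥(hsubli.extend (Set.subset_univ (Set.range b')))),
      (j : (Fin d → ℝ) ⧸ V) ∉ Set.range b' → ∀ z ∈ Λ', B.repr z j = 0 := by
    intro j hj
    have : Λ' ≤ Submodule.comap ((B.coord j).restrictScalars ℤ)
        (⊥ : Submodule ℤ ℝ) := by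
      rw [span_le]
      rintro _ ⟨i, rfl⟩
      have hmem : b' i ∈ hsubli.extend (Set.subset_univ (Set.range b')) :=
        hsubli.subset_extend _ ⟨i, rfl⟩
      simp only [SetLike.mem_coe, Submodule.mem_comap, LinearMap.coe_restrictScalars,
        Module.Basis.coord_apply, Submodule.mem_bot]
      rw [show b' i = B ⟨b' i, hmem⟩ by rw [Module.Basis.coe_extend], B.repr_self]
      rw [Finsupp.single_apply]
      have hne : (⟨b' i, hmem⟩ : ↥(hsubli.extend (Set.subset_univ (Set.range b')))) ≠ j := by
        intro h
        apply hj
        rw [← h]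
        exact ⟨i, rfl⟩
      simp [hne]
    intro z hz
    have := this hz
    simpa using this
  -- main case split
  by_cases hall : ∀ (j : ↥(hsubli.extend (Set.subset_univ (Set.range b')))),
      (∃ n : ℤ, B.repr (q x) j = n) ∧
      ((j : (Fin d → ℝ) ⧸ V) ∉ Set.range b' → B.repr (q x) j = 0)
  · exfalso
    apply hxΛ'
    rw [← B.sum_repr (q x)]
    refine Submodule.sum_mem _ fun j _ => ?_
    by_cases hj : (j : (Fin d → ℝ) ⧸ V) ∈ Set.range b'
    · obtain ⟨n, hn⟩ := (hall j).1
      rw [hn, Int.cast_smul_eq_zsmul]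
      refine Submodule.smul_mem _ _ (subset_span ?_)
      rw [Module.Basis.coe_extend]
      exact hj
    · rw [(hall j).2 hj, zero_smul]
      exact Submodule.zero_mem _
  · push_neg at hall
    obtain ⟨j, hj⟩ := hall
    by_cases hA : ∃ n : ℤ, B.repr (q x) j = n
    · obtain ⟨hjout, hjne⟩ := hj hA
      refine ⟨(2 * B.repr (q x) j)⁻¹ • ((B.coord j).comp q), ?_, ?_⟩
      · intro g hg
        refine ⟨0, ?_⟩
        have h0 := hcoord2 j hjout (q g) (hGΛ' g hg)
        show (2 * B.repr (q x) j)⁻¹ • ((B.coord j) (q g)) = ((0:ℤ):ℝ)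
        rw [Module.Basis.coord_apply, h0]
        simp
      · intro n
        show (2 * B.repr (q x) j)⁻¹ • ((B.coord j) (q x)) ≠ (n:ℝ)
        rw [Module.Basis.coord_apply, smul_eq_mul]
        intro hEq
        apply half_not_int n
        rw [← hEq]
        field_simp
    · push_neg at hA
      refine ⟨(B.coord j).comp q, ?_, ?_⟩
      · intro g hg
        obtain ⟨n, hn⟩ := hcoord1 j (q g) (hGΛ' g hg)
        exact ⟨n, by simpa using hn⟩
      · intro n
        have := hA n
        simpa using this

/-- The projection `ℝ^d → (ℝ/ℤ)^d` as an additive group hom. -/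
noncomputable def torusProj (d : ℕ) : (Fin d → ℝ) →+ (Fin d → AddCircle (1:ℝ)) :=
  AddMonoidHom.mk' (fun y i => (y i : AddCircle (1:ℝ))) (by
    intro a b
    funext i
    push_cast
    rfl)

lemma torusProj_continuous (d : ℕ) : Continuous (torusProj d) := by
  apply continuous_pi
  intro i
  exact (AddCircle.continuous_mk' (1:ℝ)).comp (continuous_apply i)

lemma torusProj_surjective (d : ℕ) : Function.Surjective (torusProj d) := by
  intro x
  refine ⟨fun i => (QuotientAddGroup.mk_surjective (x i)).choose, ?_⟩
  funext i
  exact (QuotientAddGroup.mk_surjective (x i)).choose_spec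

lemma sep_torus {d : ℕ} (H : AddSubgroup (Fin d → AddCircle (1:ℝ)))
    (hH : IsClosed (H : Set (Fin d → AddCircle (1:ℝ))))
    (x : Fin d → AddCircle (1:ℝ)) (hx : x ∉ H) :
    ∃ m : Fin d → ℤ, (∀ h ∈ H, chi m h = 1) ∧ chi m x ≠ 1 := by
  classical
  set G : AddSubgroup (Fin d → ℝ) := H.comap (torusProj d) with hGdef
  have hGclosed : IsClosed (G : Set (Fin d → ℝ)) := hH.preimage (torusProj_continuous d)
  obtain ⟨xt, hxt⟩ := torusProj_surjective d x
  have hxtG : xt ∉ G := by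
    intro hmem
    exact hx (hxt ▸ hmem)
  obtain ⟨φ, hφint, hφx⟩ := sep_real d G hGclosed xt hxtG
  -- the standard basis vectors are in G
  have hsingle : ∀ i : Fin d, (Pi.single i (1:ℝ) : Fin d → ℝ) ∈ G := by
    intro i
    have : torusProj d (Pi.single i (1:ℝ)) = 0 := by
      funext j
      show (((Pi.single i (1:ℝ) : Fin d → ℝ) j : ℝ) : AddCircle (1:ℝ)) = (0 : Fin d → AddCircle (1:ℝ)) j
      rcases eq_or_ne j i with rfl | hji
      · rw [Pi.single_eq_same]
        exact AddCircle.coe_period 1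
      · rw [Pi.single_eq_of_ne hji]
        show ((0:ℝ) : AddCircle (1:ℝ)) = (0 : Fin d → AddCircle (1:ℝ)) j
        norm_cast
    show torusProj d _ ∈ H
    rw [this]
    exact H.zero_mem
  have hm : ∀ i : Fin d, ∃ n : ℤ, φ (Pi.single i (1:ℝ)) = n := fun i => hφint _ (hsingle i)
  choose m hmval using hm
  -- key computation : chi m (torusProj y) = ee (φ y)
  have hkey : ∀ y : Fin d → ℝ, chi m (torusProj d y) = ee ((φ y : ℝ) : AddCircle (1:ℝ)) := by
    intro y
    rw [chi_eq_ee_sum]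
    congr 1
    have h1 : ∀ i, (m i) • ((torusProj d y) i) = (((m i : ℝ) * y i : ℝ) : AddCircle (1:ℝ)) := by
      intro i
      show (m i) • ((y i : ℝ) : AddCircle (1:ℝ)) = _
      rw [← AddCircle.coe_zsmul]
      norm_cast
      rw [zsmul_eq_mul]
    rw [Finset.sum_congr rfl (fun i _ => h1 i)]
    have h2 : (∑ i, (((m i : ℝ) * y i : ℝ) : AddCircle (1:ℝ)))
        = ((∑ i, (m i : ℝ) * y i : ℝ) : AddCircle (1:ℝ)) := by
      induction (Finset.univ : Finset (Fin d)) using Finset.induction_on with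
      | empty => simp
      | insert _ _ hnotmem ih => rw [Finset.sum_insert hnotmem, Finset.sum_insert hnotmem, ih]; push_cast; rfl
    rw [h2]
    congr 1
    -- φ y = ∑ i, m i * y i
    have hy : y = ∑ i, y i • (Pi.single i (1:ℝ) : Fin d → ℝ) := by
      funext j
      simp [Pi.single_apply, Finset.sum_ite_eq]
    conv_rhs => rw [hy]
    rw [map_sum]
    refine Finset.sum_congr rfl fun i _ => ?_
    rw [map_smul, hmval i, smul_eq_mul, mul_comm]
  refine ⟨m, ?_, ?_⟩
  · intro h hh
    obtain ⟨y, rfl⟩ := torusProj_surjective d h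
    obtain ⟨n, hn⟩ := hφint y hh
    rw [hkey y, hn]
    have : ((n : ℝ) : AddCircle (1:ℝ)) = 0 := by
      rw [AddCircle.coe_eq_zero_iff]
      exact ⟨n, by simp⟩
    rw [this, ee_zero]
  · rw [← hxt, hkey xt]
    intro hone
    rw [ee_eq_one_iff, AddCircle.coe_eq_zero_iff] at hone
    obtain ⟨n, hn⟩ := hone
    exact hφx n (by rw [← hn]; simp)

open MvPolynomial in
/-- Evaluation of polynomials in `z_i, z_i⁻¹` at a point of the torus. -/
noncomputable def evalAt {d : ℕ} (x : Fin d → AddCircle (1:ℝ)) :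
    MvPolynomial (Fin d ⊕ Fin d) ℂ →+* ℂ :=
  MvPolynomial.eval (Sum.elim (fun i => ee (x i)) (fun i => (ee (x i))⁻¹))

open MvPolynomial in
/-- The "monomial" attached to an integer vector `m`. -/
noncomputable def chiPoly (d : ℕ) (m : Fin d → ℤ) : MvPolynomial (Fin d ⊕ Fin d) ℂ :=
  ∏ i, (X (Sum.inl i)) ^ ((m i).toNat) * (X (Sum.inr i)) ^ ((-(m i)).toNat)

lemma evalAt_chiPoly {d : ℕ} (x : Fin d → AddCircle (1:ℝ)) (m : Fin d → ℤ) :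
    evalAt x (chiPoly d m) = chi m x := by
  rw [chiPoly, map_prod, chi]
  refine Finset.prod_congr rfl fun i _ => ?_
  rw [map_mul, map_pow, map_pow, evalAt, MvPolynomial.eval_X, MvPolynomial.eval_X]
  simp only [Sum.elim_inl, Sum.elim_inr]
  have hz := ee_ne_zero (x i)
  rw [inv_pow, ← zpow_natCast (ee (x i)) ((m i).toNat), ← zpow_natCast (ee (x i)) ((-(m i)).toNat),
    ← zpow_neg, ← zpow_add₀ hz]
  congr 1
  omega

/-- The vanishing ideal of a subset of the torus. -/
noncomputable def vanishingIdeal {d : ℕ} (Y : Set (Fin d → AddCircle (1:ℝ))) :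
    Ideal (MvPolynomial (Fin d ⊕ Fin d) ℂ) :=
  ⨅ (x : Fin d → AddCircle (1:ℝ)) (_ : x ∈ Y), RingHom.ker (evalAt x)

lemma mem_vanishingIdeal {d : ℕ} {Y : Set (Fin d → AddCircle (1:ℝ))}
    {f : MvPolynomial (Fin d ⊕ Fin d) ℂ} :
    f ∈ vanishingIdeal Y ↔ ∀ x ∈ Y, evalAt x f = 0 := by
  simp [vanishingIdeal, Ideal.mem_iInf, RingHom.mem_ker]

/-- the collection of finite unions of closed subgroups of the real
torus `R = ℝ^d/ℤ^d`, ordered by inclusion, satisfies the descending chain condition: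
every decreasing sequence stabilizes. -/
theorem stmt15 (d : ℕ) (X : ℕ → Set (Fin d → AddCircle (1 : ℝ)))
    (hX : ∀ k, IsFinUnionClosedSubgroups d (X k))
    (hdec : ∀ k, X (k + 1) ⊆ X k) :
    ∃ N : ℕ, ∀ k, N ≤ k → X k = X N := by
  classical
  have hchain : ∀ k l : ℕ, k ≤ l → X l ⊆ X k := by
    intro k l hkl
    induction l with
    | zero => rw [Nat.le_zero.mp hkl]
    | succ n ih =>
      rcases Nat.lt_or_ge k (n+1) with h | h
      · exact (hdec n).trans (ih (Nat.lt_succ_iff.mp h))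
      · rw [Nat.le_antisymm hkl h]
  let J : ℕ →o Ideal (MvPolynomial (Fin d ⊕ Fin d) ℂ) :=
    ⟨fun k => vanishingIdeal (X k), by
      intro k l hkl
      intro f hf
      rw [mem_vanishingIdeal] at hf ⊢
      exact fun x hx => hf x (hchain k l hkl hx)⟩
  obtain ⟨N, hN⟩ := monotone_stabilizes_iff_noetherian.mpr inferInstance J
  refine ⟨N, fun k hk => ?_⟩
  refine Set.Subset.antisymm (hchain N k hk) ?_
  intro x hxN
  by_contra hxk
  obtain ⟨S, hSfin, hSclosed, hSeq⟩ := hX k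
  have hxnot : ∀ H ∈ S, x ∉ H := by
    intro H hH hmem
    apply hxk
    rw [hSeq]
    exact Set.mem_biUnion hH hmem
  have hsep : ∀ H : AddSubgroup (Fin d → AddCircle (1:ℝ)), H ∈ S →
      ∃ m : Fin d → ℤ, (∀ h ∈ H, chi m h = 1) ∧ chi m x ≠ 1 := by
    intro H hH
    exact sep_torus H (hSclosed H hH) x (hxnot H hH)
  choose! m hm1 hm2 using hsep
  set f : MvPolynomial (Fin d ⊕ Fin d) ℂ :=
    ∏ H ∈ hSfin.toFinset, (chiPoly d (m H) - 1) with hfdef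
  have hfk : f ∈ vanishingIdeal (X k) := by
    rw [mem_vanishingIdeal]
    intro y hy
    rw [hSeq] at hy
    obtain ⟨H, hH, hyH⟩ := Set.mem_iUnion₂.mp hy
    rw [hfdef, map_prod]
    refine Finset.prod_eq_zero (hSfin.mem_toFinset.mpr hH) ?_
    rw [map_sub, map_one, evalAt_chiPoly, hm1 H hH y hyH, sub_self]
  have hfN : f ∈ vanishingIdeal (X N) := by
    have h2 : vanishingIdeal (X k) = vanishingIdeal (X N) := (hN k hk).symm
    rwa [h2] at hfk
  have := mem_vanishingIdeal.mp hfN x hxN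
  rw [hfdef, map_prod] at this
  obtain ⟨H, hH, hzero⟩ := Finset.prod_eq_zero_iff.mp this
  rw [map_sub, map_one, evalAt_chiPoly] at hzero
  exact hm2 H (hSfin.mem_toFinset.mp hH) (sub_eq_zero.mp hzero)
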